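/- Elimination of imaginaries, fiberwise form: let G be a Z-group and X ⊆ G^{m+1} a ∅-definable Presburger set. Then there exist an integer n and a ∅-definable Presburger function F : G^m → G^n such that for all x, x' ∈ G^m, F(x) = F(x') if and only if X_x = X_{x'} (where X_x = {t ∈ G ∣ (x,t) ∈ X}, and X_x = ∅ for x outside the projection of X). -/

import Mathlib

open FirstOrder FirstOrder.Language

universe u v w

set_option linter.unusedSectionVars false

namespace Presburger

/-- Function symbols of the Presburger language: `+`, `0`, `1`. -/
inductive Func : ℕ → Type
  | add : Func 2
  | zero : Func 0
  | one : Func 0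

/-- Relation symbols of the Presburger language: `≤` and congruence mod `n` for each `n > 0`. -/
inductive Rel : ℕ → Type
  | le : Rel 2
  | mod (n : ℕ) (hn : 0 < n) : Rel 2

/-- The Presburger language `⟨+, ≤, {≡ mod n}_{n>0}, 0, 1⟩`. -/
def Lang : FirstOrder.Language := ⟨Func, Rel⟩

/-- The natural interpretation of the Presburger language on a linearly ordered abelian
group with a distinguished element `1`; congruence mod `n` means the difference is an
`n`-th multiple. -/
instance instStructure (G : Type*) [AddCommGroup G] [LinearOrder G] [One G] :
    Lang.Structure G where
  funMap {_} f v :=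
    match f with
    | Func.add => v 0 + v 1
    | Func.zero => 0
    | Func.one => 1
  RelMap {_} r v :=
    match r with
    | Rel.le => v 0 ≤ v 1
    | Rel.mod k _ => ∃ z, v 0 - v 1 = (k : ℤ) • z

/-- A `Z`-group: a structure elementarily equivalent to `ℤ` in the Presburger language. -/
def IsZGroup (G : Type*) [AddCommGroup G] [LinearOrder G] [One G] : Prop :=
  ℤ ≅[Lang] G

section Aux

variable {α : Type*} {M : Type*} [AddCommGroup M] [LinearOrder M] [One M] {m : ℕ}

/-- The formula `t₁ ≤ t₂`. -/
def leF (t₁ t₂ : Lang.Term α) : Lang.Formula α :=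
  Relations.formula₂ (Rel.le : Lang.Relations 2) t₁ t₂

@[simp] lemma realize_leF {t₁ t₂ : Lang.Term α} {v : α → M} :
    (leF t₁ t₂).Realize v ↔ t₁.realize v ≤ t₂.realize v := by
  rw [leF]; exact (Formula.realize_rel₂ (L := Lang) (R := Rel.le)).trans Iff.rfl

/-- The zero term. -/
def zeroT : Lang.Term α := Constants.term (Func.zero : Lang.Constants)

@[simp] lemma realize_zeroT {v : α → M} : (zeroT : Lang.Term α).realize v = 0 :=
  Term.realize_constants

/-- Sum of two variables as a term. -/
def addT (a b : α) : Lang.Term α :=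
  Functions.apply₂ (Func.add : Lang.Functions 2) (Term.var a) (Term.var b)

@[simp] lemma realize_addT {a b : α} {v : α → M} : (addT a b).realize v = v a + v b := by
  rw [addT]; exact (Term.realize_functions_apply₂ (L := Lang) (f := Func.add)).trans rfl

/-- `θ a < θ b` where `θ : ℤ ≃ ℕ` is the zig-zag enumeration, expressed semantically. -/
def LTheta (a b : M) : Prop :=
  (0 ≤ a ∧ 0 ≤ b ∧ ¬ b ≤ a) ∨ (¬ 0 ≤ a ∧ ¬ 0 ≤ b ∧ ¬ a ≤ b) ∨
  (0 ≤ a ∧ ¬ 0 ≤ b ∧ ¬ 0 ≤ a + b) ∨ (¬ 0 ≤ a ∧ 0 ≤ b ∧ 0 ≤ a + b)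

/-- Formula for `LTheta (v a) (v b)`. -/
def ltθF (a b : α) : Lang.Formula α :=
  (leF zeroT (Term.var a) ⊓ (leF zeroT (Term.var b) ⊓ (leF (Term.var b) (Term.var a)).not)) ⊔
  (((leF zeroT (Term.var a)).not ⊓ ((leF zeroT (Term.var b)).not ⊓
      (leF (Term.var a) (Term.var b)).not)) ⊔
  ((leF zeroT (Term.var a) ⊓ ((leF zeroT (Term.var b)).not ⊓ (leF zeroT (addT a b)).not)) ⊔
  ((leF zeroT (Term.var a)).not ⊓ (leF zeroT (Term.var b) ⊓ leF zeroT (addT a b)))))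

@[simp] lemma realize_ltθF {a b : α} {v : α → M} :
    (ltθF a b).Realize v ↔ LTheta (v a) (v b) := by
  simp [ltθF, LTheta]

/-- The zig-zag enumeration of `ℤ`. -/
def θ (z : ℤ) : ℕ := if 0 ≤ z then (2 * z).toNat else (-2 * z - 1).toNat

lemma θ_inj : Function.Injective θ := by
  intro a b h
  unfold θ at h
  split_ifs at h <;> omega

lemma LTheta_int {a b : ℤ} : LTheta a b ↔ θ a < θ b := by
  unfold LTheta θ
  split_ifs <;> omega

/-- Equality of two variables. -/
def eqF (a b : α) : Lang.Formula α := Term.equal (Term.var a) (Term.var b)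

@[simp] lemma realize_eqF {a b : α} {v : α → M} : (eqF a b).Realize v ↔ v a = v b := by
  simp [eqF]

/-- Lexicographic θ-order on `m`-tuples, as a formula; `inl` tuple ≺ `inr` tuple. -/
noncomputable def lexF (m : ℕ) : Lang.Formula (Fin m ⊕ Fin m) :=
  BoundedFormula.iSup fun i : Fin m =>
    (BoundedFormula.iInf fun j : {j : Fin m // j < i} =>
      eqF (Sum.inl j.1) (Sum.inr j.1)) ⊓ ltθF (Sum.inl i) (Sum.inr i)

/-- Semantic lexicographic θ-order on tuples. -/
def GLex (u w : Fin m → M) : Prop :=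
  ∃ i, (∀ j, j < i → u j = w j) ∧ LTheta (u i) (w i)

lemma realize_lexF {v : Fin m ⊕ Fin m → M} :
    (lexF m).Realize v ↔ GLex (v ∘ Sum.inl) (v ∘ Sum.inr) := by
  rw [lexF, Formula.Realize, BoundedFormula.realize_iSup]
  refine exists_congr fun i => ?_
  rw [BoundedFormula.realize_inf, BoundedFormula.realize_iInf]
  exact and_congr ⟨fun h j hj => realize_eqF.1 (h ⟨j, hj⟩), fun h j => realize_eqF.2 (h j.1 j.2)⟩
    realize_ltθF

lemma GLex_int_iff {u w : Fin m → ℤ} :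
    GLex u w ↔ Pi.Lex (· < ·) (· < ·) (θ ∘ u) (θ ∘ w) := by
  unfold GLex Pi.Lex
  refine exists_congr fun i => ?_
  constructor
  · rintro ⟨h1, h2⟩
    exact ⟨fun j hj => congrArg θ (h1 j hj), LTheta_int.1 h2⟩
  · rintro ⟨h1, h2⟩
    exact ⟨fun j hj => θ_inj (h1 j hj), LTheta_int.2 h2⟩

/-- Relabeling for the left copy of the parameters. -/
def r₁ (m : ℕ) : Fin (m + 1) → (Fin m ⊕ Fin m) ⊕ Fin 1 :=
  Fin.lastCases (Sum.inr 0) fun j => Sum.inl (Sum.inl j)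

/-- Relabeling for the right copy of the parameters. -/
def r₂ (m : ℕ) : Fin (m + 1) → (Fin m ⊕ Fin m) ⊕ Fin 1 :=
  Fin.lastCases (Sum.inr 0) fun j => Sum.inl (Sum.inr j)

variable (φ : Lang.Formula (Fin (m + 1)))

/-- Formula saying the `φ`-fibers over the `inl` tuple and the `inr` tuple agree. -/
noncomputable def EFormula : Lang.Formula (Fin m ⊕ Fin m) :=
  Formula.iAlls (Fin 1) ((φ.relabel (r₁ m)).iff (φ.relabel (r₂ m)))

/-- The semantic fiber-equality relation. -/
def Efib (u w : Fin m → M) : Prop :=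
  ∀ t : M, φ.Realize (Fin.snoc u t) ↔ φ.Realize (Fin.snoc w t)

lemma comp_r₁ (v : Fin m ⊕ Fin m → M) (i : Fin 1 → M) :
    (fun a => Sum.elim v i a) ∘ r₁ m = Fin.snoc (v ∘ Sum.inl) (i 0) := by
  funext a
  refine Fin.lastCases ?_ (fun j => ?_) a <;> simp [r₁]

lemma comp_r₂ (v : Fin m ⊕ Fin m → M) (i : Fin 1 → M) :
    (fun a => Sum.elim v i a) ∘ r₂ m = Fin.snoc (v ∘ Sum.inr) (i 0) := by
  funext a
  refine Fin.lastCases ?_ (fun j => ?_) a <;> simp [r₂]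

lemma realize_EFormula {v : Fin m ⊕ Fin m → M} :
    (EFormula φ).Realize v ↔ Efib φ (v ∘ Sum.inl) (v ∘ Sum.inr) := by
  rw [EFormula, Formula.realize_iAlls]
  constructor
  · intro h t
    have := h fun _ => t
    rw [Formula.realize_iff, Formula.realize_relabel, Formula.realize_relabel] at this
    rw [comp_r₁, comp_r₂] at this
    exact this
  · intro h i
    rw [Formula.realize_iff, Formula.realize_relabel, Formula.realize_relabel]
    rw [comp_r₁, comp_r₂]
    exact h (i 0)

lemma Efib_refl (u : Fin m → M) : Efib φ u u := fun _ => Iff.rfl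
lemma Efib_symm {u w : Fin m → M} (h : Efib φ u w) : Efib φ w u := fun t => (h t).symm
lemma Efib_trans {u w z : Fin m → M} (h : Efib φ u w) (h' : Efib φ w z) : Efib φ u z :=
  fun t => (h t).trans (h' t)

/-- `inr` tuple is the canonical representative of the fiber-equality class of `inl` tuple. -/
noncomputable def chi : Lang.Formula (Fin m ⊕ Fin m) :=
  EFormula φ ⊓
    Formula.iAlls (Fin m)
      (((EFormula φ).relabel
          (Sum.elim (fun j => Sum.inr j) fun j => Sum.inl (Sum.inl j))) ⟹
        ((lexF m).relabel
          (Sum.elim (fun j => Sum.inr j) fun j => Sum.inl (Sum.inr j))).not)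

/-- Semantic version of `chi`. -/
def Ch (x y : Fin m → M) : Prop :=
  Efib φ x y ∧ ∀ y', Efib φ y' x → ¬ GLex y' y

lemma realize_chi {v : Fin m ⊕ Fin m → M} :
    (chi φ).Realize v ↔ Ch φ (v ∘ Sum.inl) (v ∘ Sum.inr) := by
  rw [chi, Formula.realize_inf, realize_EFormula, Formula.realize_iAlls]
  refine and_congr Iff.rfl (forall_congr' fun i => ?_)
  rw [Formula.realize_imp, Formula.realize_not, Formula.realize_relabel,
    Formula.realize_relabel, realize_EFormula, realize_lexF]
  exact Iff.rfl

/-- Every class has a canonical representative. -/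
noncomputable def sigma1 : Lang.Sentence :=
  Formula.iAlls (Fin m)
    ((Formula.iExs (Fin m) (chi φ)).relabel (Sum.inr : Fin m → Empty ⊕ Fin m))

lemma realize_sigma1 : M ⊨ sigma1 φ ↔ ∀ x : Fin m → M, ∃ y, Ch φ x y := by
  rw [sigma1, Sentence.Realize, Formula.realize_iAlls]
  refine forall_congr' fun x => ?_
  rw [Formula.realize_relabel, Formula.realize_iExs]
  exact exists_congr fun y => realize_chi φ

/-- Tuple equality. -/
noncomputable def eqTup (m : ℕ) : Lang.Formula (Fin m ⊕ Fin m) :=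
  BoundedFormula.iInf fun j : Fin m => eqF (Sum.inl j) (Sum.inr j)

lemma realize_eqTup {v : Fin m ⊕ Fin m → M} :
    (eqTup m).Realize v ↔ v ∘ Sum.inl = v ∘ Sum.inr := by
  rw [eqTup, Formula.Realize, BoundedFormula.realize_iInf, funext_iff]
  exact forall_congr' fun j => realize_eqF

/-- The body of the coherence sentence. -/
noncomputable def body : Lang.Formula ((Fin m ⊕ Fin m) ⊕ (Fin m ⊕ Fin m)) :=
  ((chi φ).relabel Sum.inl ⊓ (chi φ).relabel Sum.inr) ⟹
    (((eqTup m).relabel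
        (Sum.elim (fun j => Sum.inl (Sum.inr j)) fun j => Sum.inr (Sum.inr j))).iff
      ((EFormula φ).relabel
        (Sum.elim (fun j => Sum.inl (Sum.inl j)) fun j => Sum.inr (Sum.inl j))))

lemma realize_body {w : (Fin m ⊕ Fin m) ⊕ (Fin m ⊕ Fin m) → M} :
    (body φ).Realize w ↔
      ((Ch φ (w ∘ Sum.inl ∘ Sum.inl) (w ∘ Sum.inl ∘ Sum.inr) ∧
        Ch φ (w ∘ Sum.inr ∘ Sum.inl) (w ∘ Sum.inr ∘ Sum.inr)) →
      ((w ∘ Sum.inl ∘ Sum.inr = w ∘ Sum.inr ∘ Sum.inr) ↔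
        Efib φ (w ∘ Sum.inl ∘ Sum.inl) (w ∘ Sum.inr ∘ Sum.inl))) := by
  rw [body, Formula.realize_imp, Formula.realize_inf, Formula.realize_relabel,
    Formula.realize_relabel, realize_chi, realize_chi, Formula.realize_iff,
    Formula.realize_relabel, Formula.realize_relabel, realize_eqTup, realize_EFormula]
  exact Iff.rfl

/-- Canonical representatives are class invariants. -/
noncomputable def sigma2 : Lang.Sentence :=
  Formula.iAlls ((Fin m ⊕ Fin m) ⊕ (Fin m ⊕ Fin m))
    ((body φ).relabel (Sum.inr : ((Fin m ⊕ Fin m) ⊕ (Fin m ⊕ Fin m)) → Empty ⊕ _))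

lemma realize_sigma2 : M ⊨ sigma2 φ ↔
    ∀ x y x' y' : Fin m → M, Ch φ x y → Ch φ x' y' → (y = y' ↔ Efib φ x x') := by
  rw [sigma2, Sentence.Realize, Formula.realize_iAlls]
  constructor
  · intro h x y x' y' h1 h2
    have := (realize_body φ).1 (Formula.realize_relabel.1 (h (Sum.elim (Sum.elim x y) (Sum.elim x' y'))))
    exact this ⟨h1, h2⟩
  · intro h i
    rw [Formula.realize_relabel, realize_body]
    rintro ⟨h1, h2⟩
    exact h _ _ _ _ h1 h2

/-- In `ℤ`: every class has a representative (θ-lex-least element of the class). -/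
lemma z_sigma1 : ∀ x : Fin m → ℤ, ∃ y, Ch φ x y := by
  intro x
  have wf : WellFounded (Pi.Lex (· < ·) (· < ·) : (Fin m → ℕ) → (Fin m → ℕ) → Prop) :=
    Pi.Lex.wellFounded _ fun i => wellFounded_lt
  obtain ⟨z', hz'T, hmin⟩ :=
    wf.has_min ((fun y => θ ∘ y) '' {y | Efib φ y x}) ⟨θ ∘ x, x, Efib_refl φ x, rfl⟩
  obtain ⟨z, hzC, rfl⟩ := hz'T
  refine ⟨z, Efib_symm φ hzC, fun y' hy' hlex => ?_⟩
  exact hmin (θ ∘ y') ⟨y', hy', rfl⟩ (GLex_int_iff.1 hlex)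

/-- In `ℤ`: the representative depends only on the class. -/
lemma z_sigma2 : ∀ x y x' y' : Fin m → ℤ,
    Ch φ x y → Ch φ x' y' → (y = y' ↔ Efib φ x x') := by
  rintro x y x' y' ⟨hxy, hymin⟩ ⟨hx'y', hy'min⟩
  constructor
  · rintro rfl
    exact Efib_trans φ hxy (Efib_symm φ hx'y')
  · intro hxx'
    have h1 : Efib φ y' x := Efib_trans φ (Efib_symm φ hx'y') (Efib_symm φ hxx')
    have h2 : Efib φ y x' := Efib_trans φ (Efib_symm φ hxy) hxx'
    have n1 : ¬ GLex y' y := hymin y' h1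
    have n2 : ¬ GLex y y' := hy'min y h2
    have wf : WellFounded ((· < ·) : Fin m → Fin m → Prop) := wellFounded_lt
    rcases @trichotomous_of _ _ (Pi.isTrichotomous_lex (· < ·) (fun {_} => (· < ·)) wf) (θ ∘ y) (θ ∘ y') with h | h | h
    · exact absurd (GLex_int_iff.2 h) n2
    · funext i
      exact θ_inj (congrFun h i)
    · exact absurd (GLex_int_iff.2 h) n1

end Aux

variable {G : Type u} [AddCommGroup G] [LinearOrder G] [One G]

/-- **Elimination of imaginaries, fiberwise form**: for every `∅`-definable set
`X ⊆ G^{m+1}` in a `Z`-group `G` there are `n : ℕ` and a `∅`-definable function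
`F : G^m → G^n` with `F x = F x'` iff the fibers `X_x` and `X_{x'}` coincide. -/
theorem elimination_of_imaginaries_fibers (hG : IsZGroup G) (m : ℕ)
    (X : Set (Fin (m + 1) → G))
    (hX : Set.Definable (∅ : Set G) Lang X) :
    ∃ (n : ℕ) (F : (Fin m → G) → (Fin n → G)),
      Set.Definable (∅ : Set G) Lang
        {z : Fin m ⊕ Fin n → G | z ∘ Sum.inr = F (z ∘ Sum.inl)} ∧
      ∀ x x' : Fin m → G,
        (F x = F x' ↔ {t : G | Fin.snoc x t ∈ X} = {t : G | Fin.snoc x' t ∈ X}) := by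
  obtain ⟨φ, rfl⟩ := Set.empty_definable_iff.1 hX
  have h1G : ∀ x : Fin m → G, ∃ y, Ch φ x y :=
    (realize_sigma1 φ).1
      (((elementarilyEquivalent_iff.1 hG) (sigma1 φ)).1 ((realize_sigma1 φ).2 (z_sigma1 φ)))
  have h2G : ∀ x y x' y' : Fin m → G, Ch φ x y → Ch φ x' y' → (y = y' ↔ Efib φ x x') :=
    (realize_sigma2 φ).1
      (((elementarilyEquivalent_iff.1 hG) (sigma2 φ)).1 ((realize_sigma2 φ).2 (z_sigma2 φ)))
  choose F hF using h1G
  refine ⟨m, F, ?_, fun x x' => ?_⟩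
  · rw [Set.empty_definable_iff]
    refine ⟨chi φ, Set.ext fun z => ?_⟩
    rw [Set.mem_setOf_eq, Set.mem_setOf_eq, realize_chi]
    constructor
    · intro h
      exact h ▸ hF (z ∘ Sum.inl)
    · intro h
      exact (h2G _ _ _ _ h (hF (z ∘ Sum.inl))).2 (Efib_refl φ _)
  · rw [h2G x (F x) x' (F x') (hF x) (hF x')]
    rw [Set.ext_iff]
    exact Iff.rfl

end Presburger
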